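/- arXiv:2311.04353 — 5 statements merged into one kernel-verified Lean document; each statement's English description precedes it below -/
import Mathlib

section
/- If x, y, z are integers satisfying x² + y² + z² = x·y·z, then 3 divides x, 3 divides y, and 3 divides z. -/
/-- If integers `x, y, z` satisfy `x² + y² + z² = x·y·z`, then `3` divides each of
`x`, `y`, `z`. -/
theorem stmt_0 (x y z : ℤ) (h : x ^ 2 + y ^ 2 + z ^ 2 = x * y * z) :
    3 ∣ x ∧ 3 ∣ y ∧ 3 ∣ z := by
  have h3 : ∀ n : ℤ, (3 : ℤ) ∣ n ↔ (n : ZMod 3) = 0 := fun n =>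
    (ZMod.intCast_zmod_eq_zero_iff_dvd n 3).symm
  have hc : ((x : ZMod 3)) ^ 2 + (y : ZMod 3) ^ 2 + (z : ZMod 3) ^ 2
      = (x : ZMod 3) * (y : ZMod 3) * (z : ZMod 3) := by
    have := congrArg (fun n : ℤ => (n : ZMod 3)) h
    push_cast at this
    exact this
  rw [h3 x, h3 y, h3 z]
  revert hc
  generalize (x : ZMod 3) = a
  generalize (y : ZMod 3) = b
  generalize (z : ZMod 3) = c
  revert a b c
  decide
end

section
/- For every natural number C there exists N such that for all n ≥ N, every solvable subgroup H of the alternating group on Fin n has index greater than C. (In other words, the minimal index of a solvable subgroup of the alternating group Aₙ tends to infinity with n.) -/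
/-!
For `n ≥ 5` the alternating group `Aₙ` is simple and perfect, hence not solvable, so a solvable
subgroup `H` is proper. Its normal core, the kernel of the action of `Aₙ` on `Aₙ ⧸ H`, is then
trivial, so `Aₙ` embeds in the symmetric group on the cosets and `n! / 2` divides `[Aₙ : H]!`.
-/

open Subgroup Nat

theorem Subgroup.index_normalCore_dvd_factorial {G : Type*} [Group G] (H : Subgroup G)
    [H.FiniteIndex] : H.normalCore.index ∣ H.index ! := by
  rw [normalCore_eq_ker, index_ker, index_eq_card, ← Nat.card_perm]
  exact card_subgroup_dvd_card _

theorem Group.not_isSolvable_of_commutator_eq_top {G : Type*} [Group G] [Nontrivial G]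
    (h : commutator G = ⊤) : ¬ Group.IsSolvable G := by
  have hseries (n : ℕ) : derivedSeries G n = ⊤ := by
    induction n with
    | zero => rfl
    | succ n ih => rw [derivedSeries_succ, ih, ← commutator_def, h]
  rintro ⟨n, hn⟩
  exact top_ne_bot ((hseries n).symm.trans hn)

theorem alternatingGroup.not_isSolvable {α : Type*} [Fintype α] [DecidableEq α]
    (h5 : 5 ≤ Nat.card α) : ¬ Group.IsSolvable (alternatingGroup α) :=
  have := (alternatingGroup.isSimpleGroup h5).toNontrivial
  Group.not_isSolvable_of_commutator_eq_top (commutator_alternatingGroup_eq_top h5)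

theorem IsSimpleGroup.card_dvd_factorial_index_of_isSolvable {G : Type*} [Group G]
    [IsSimpleGroup G] (hG : ¬ Group.IsSolvable G) (H : Subgroup G) [H.FiniteIndex]
    (hH : Group.IsSolvable H) : Nat.card G ∣ H.index ! := by
  have hne : H ≠ ⊤ := by
    rintro rfl
    have := hH
    exact hG (Group.isSolvable_of_surjective (f := (⊤ : Subgroup G).subtype)
      fun g => ⟨⟨g, mem_top g⟩, rfl⟩)
  rcases H.normalCore_normal.eq_bot_or_eq_top with hcore | hcore
  · simpa [hcore] using H.index_normalCore_dvd_factorial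
  · exact absurd (eq_top_iff.mpr (hcore ▸ H.normalCore_le)) hne

theorem two_mul_factorial_lt {m n : ℕ} (h : m + 2 < n) : 2 * m ! < n ! :=
  calc 2 * m ! ≤ (m + 2) * (m + 1) * m ! := by gcongr; nlinarith
    _ = (m + 2)! := by simp only [factorial_succ]; ring
    _ < n ! := (factorial_lt (succ_pos _)).mpr h

/-- The minimal index of a solvable subgroup of the alternating group `Aₙ` tends to
infinity with `n`: for every `C` there is `N` such that for all `n ≥ N`, every solvable
subgroup of the alternating group on `Fin n` has index greater than `C`. -/
theorem stmt_2 (C : ℕ) :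
    ∃ N : ℕ, ∀ n : ℕ, N ≤ n →
      ∀ H : Subgroup (alternatingGroup (Fin n)), IsSolvable H → C < H.index := by
  refine ⟨C + 5, fun n hn H hH => ?_⟩
  have h5 : 5 ≤ Nat.card (Fin n) := by rw [Nat.card_fin]; omega
  have : Nontrivial (Fin n) := Fin.nontrivial_iff_two_le.mpr (by omega)
  have := alternatingGroup.isSimpleGroup h5
  by_contra! hC
  have hcard : Nat.card (alternatingGroup (Fin n)) ≤ C ! :=
    (Nat.le_of_dvd (factorial_pos _) (IsSimpleGroup.card_dvd_factorial_index_of_isSolvable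
      (alternatingGroup.not_isSolvable h5) H hH)).trans (factorial_le hC)
  have htwo := two_mul_nat_card_alternatingGroup (α := Fin n)
  rw [Nat.card_perm, Nat.card_fin] at htwo
  have := two_mul_factorial_lt (m := C) (n := n) (by omega)
  omega
end

section
/- Let k be an algebraically closed field of characteristic ≠ 2 and let λ ∈ k with λ ≠ 0 and λ ≠ 1. A nonzero vector (x, y, z, w) ∈ k⁴ satisfies F(x,y,z,w) = 0 together with the vanishing of all four partial derivatives of F at (x,y,z,w) if and only if (x,y,z,w) is a scalar multiple of one of the 12 vectors (1,0,0,0), (0,1,0,0), (0,0,1,0), (0,0,0,1), or (1, ε₂, ε₃, ε₄) with ε₂, ε₃, ε₄ ∈ {1, −1}. That is, the singular locus of the quartic surface K consists exactly of these 12 projective points. -/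
open MvPolynomial

/-- The singular locus of the quartic Kummer model
`F = (λ−1)x²y² − λx²z² + y²z² + x²w² − λy²w² + (λ−1)z²w²` over an algebraically closed
field of characteristic `≠ 2` (with `λ ≠ 0, 1`) consists exactly of the `12` projective
points `(1:0:0:0), (0:1:0:0), (0:0:1:0), (0:0:0:1)` and `(1:ε₂:ε₃:ε₄)` with
`ε₂, ε₃, ε₄ ∈ {1, −1}`. -/
theorem stmt_4 {k : Type*} [Field k] [IsAlgClosed k] (h2 : (2 : k) ≠ 0)
    (lam : k) (h0 : lam ≠ 0) (h1 : lam ≠ 1)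
    (F : MvPolynomial (Fin 4) k)
    (hF : F = C (lam - 1) * X 0 ^ 2 * X 1 ^ 2 - C lam * X 0 ^ 2 * X 2 ^ 2
        + X 1 ^ 2 * X 2 ^ 2 + X 0 ^ 2 * X 3 ^ 2 - C lam * X 1 ^ 2 * X 3 ^ 2
        + C (lam - 1) * X 2 ^ 2 * X 3 ^ 2)
    (v : Fin 4 → k) (hv : v ≠ 0) :
    (eval v F = 0 ∧ ∀ i : Fin 4, eval v (pderiv i F) = 0) ↔
      ∃ c : k, c ≠ 0 ∧
        (v = c • ![1, 0, 0, 0] ∨ v = c • ![0, 1, 0, 0] ∨ v = c • ![0, 0, 1, 0] ∨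
          v = c • ![0, 0, 0, 1] ∨
          ∃ e2 e3 e4 : k, (e2 = 1 ∨ e2 = -1) ∧ (e3 = 1 ∨ e3 = -1) ∧ (e4 = 1 ∨ e4 = -1) ∧
            v = c • ![1, e2, e3, e4]) := by
  have h1' : lam - 1 ≠ 0 := sub_ne_zero.mpr h1
  have hFa : eval v F = (lam-1)*(v 0)^2*(v 1)^2 - lam*(v 0)^2*(v 2)^2 + (v 1)^2*(v 2)^2
      + (v 0)^2*(v 3)^2 - lam*(v 1)^2*(v 3)^2 + (lam-1)*(v 2)^2*(v 3)^2 := by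
    subst hF
    simp only [map_add, map_sub, map_mul, map_pow, eval_C, eval_X]
    try ring
  have hP0 : eval v (pderiv 0 F) = 2 * v 0 * ((lam-1)*(v 1)^2 - lam*(v 2)^2 + (v 3)^2) := by
    subst hF; simp [pderiv_mul, pderiv_pow, pderiv_X, pderiv_C]; ring
  have hP1 : eval v (pderiv 1 F) = 2 * v 1 * ((lam-1)*(v 0)^2 + (v 2)^2 - lam*(v 3)^2) := by
    subst hF; simp [pderiv_mul, pderiv_pow, pderiv_X, pderiv_C]; ring
  have hP2 : eval v (pderiv 2 F) = 2 * v 2 * (-lam*(v 0)^2 + (v 1)^2 + (lam-1)*(v 3)^2) := by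
    subst hF; simp [pderiv_mul, pderiv_pow, pderiv_X, pderiv_C]; ring
  have hP3 : eval v (pderiv 3 F) = 2 * v 3 * ((v 0)^2 - lam*(v 1)^2 + (lam-1)*(v 2)^2) := by
    subst hF; simp [pderiv_mul, pderiv_pow, pderiv_X, pderiv_C]; ring
  set a := v 0 with ha
  set b := v 1 with hb
  set c := v 2 with hc
  set d := v 3 with hd
  have veq : ∀ w : Fin 4 → k, a = w 0 → b = w 1 → c = w 2 → d = w 3 → v = w := by
    intro w e0 e1 e2 e3
    funext i
    fin_cases i
    · exact ha ▸ e0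
    · exact hb ▸ e1
    · exact hc ▸ e2
    · exact hd ▸ e3
  have cancel : ∀ x y : k, x ≠ 0 → x * y = 0 → y = 0 := by
    intro x y hx hxy
    exact (mul_eq_zero.mp hxy).resolve_left hx
  have sq_ne : ∀ x : k, x ≠ 0 → x ^ 2 ≠ 0 := fun x hx => pow_ne_zero 2 hx
  have sq0 : ∀ x : k, x ^ 2 = 0 → x = 0 := fun x hx => by
    exact pow_eq_zero_iff (by norm_num) |>.mp hx
  have pdall : (∀ i : Fin 4, eval v (pderiv i F) = 0) ↔
      (eval v (pderiv 0 F) = 0 ∧ eval v (pderiv 1 F) = 0 ∧ eval v (pderiv 2 F) = 0 ∧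
        eval v (pderiv 3 F) = 0) := by
    constructor
    · intro h; exact ⟨h 0, h 1, h 2, h 3⟩
    · rintro ⟨g0, g1, g2, g3⟩ i
      fin_cases i
      · exact g0
      · exact g1
      · exact g2
      · exact g3
  constructor
  · rintro ⟨-, hPD⟩
    have hA : a = 0 ∨ (lam-1)*b^2 - lam*c^2 + d^2 = 0 := by
      have := hPD 0; rw [hP0] at this
      rcases mul_eq_zero.mp this with h | h
      · exact Or.inl ((mul_eq_zero.mp h).resolve_left h2)
      · exact Or.inr h
    have hB : b = 0 ∨ (lam-1)*a^2 + c^2 - lam*d^2 = 0 := by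
      have := hPD 1; rw [hP1] at this
      rcases mul_eq_zero.mp this with h | h
      · exact Or.inl ((mul_eq_zero.mp h).resolve_left h2)
      · exact Or.inr h
    have hC : c = 0 ∨ -lam*a^2 + b^2 + (lam-1)*d^2 = 0 := by
      have := hPD 2; rw [hP2] at this
      rcases mul_eq_zero.mp this with h | h
      · exact Or.inl ((mul_eq_zero.mp h).resolve_left h2)
      · exact Or.inr h
    have hD : d = 0 ∨ a^2 - lam*b^2 + (lam-1)*c^2 = 0 := by
      have := hPD 3; rw [hP3] at this
      rcases mul_eq_zero.mp this with h | h
      · exact Or.inl ((mul_eq_zero.mp h).resolve_left h2)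
      · exact Or.inr h
    by_cases haz : a = 0
    · by_cases hbz : b = 0
      · by_cases hcz : c = 0
        · have hdz : d ≠ 0 := by
            intro hdz
            exact hv (veq 0 haz hbz hcz hdz)
          refine ⟨d, hdz, Or.inr (Or.inr (Or.inr (Or.inl ?_)))⟩
          refine veq _ ?_ ?_ ?_ ?_ <;> simp [haz, hbz, hcz]
        · have hd0 : d = 0 := by
            have hC' := hC.resolve_left hcz
            rw [haz, hbz] at hC'
            exact sq0 d (cancel _ _ h1' (by linear_combination hC'))
          refine ⟨c, hcz, Or.inr (Or.inr (Or.inl ?_))⟩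
          refine veq _ ?_ ?_ ?_ ?_ <;> simp [haz, hbz, hd0]
      · have hB' := hB.resolve_left hbz
        by_cases hcz : c = 0
        · have hd0 : d = 0 := by
            rw [haz, hcz] at hB'
            exact sq0 d (cancel _ _ h0 (by linear_combination -hB'))
          refine ⟨b, hbz, Or.inr (Or.inl ?_)⟩
          refine veq _ ?_ ?_ ?_ ?_ <;> simp [haz, hcz, hd0]
        · exfalso
          have hC' := hC.resolve_left hcz
          have hdz : d ≠ 0 := by
            intro hd0
            rw [haz, hd0] at hC'
            exact hbz (sq0 b (by linear_combination hC'))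
          have hD' := hD.resolve_left hdz
          have key : (2:k) * (lam * ((lam - 1) * d ^ 2)) = 0 := by
            rw [haz] at hB' hC' hD'
            linear_combination -(lam - 1) * hB' + lam * hC' + hD'
          exact sq_ne d hdz (cancel _ _ h1' (cancel _ _ h0 (cancel _ _ h2 key)))
    · have hA' := hA.resolve_left haz
      by_cases hbz : b = 0
      · by_cases hcz : c = 0
        · have hd0 : d = 0 := by
            rw [hbz, hcz] at hA'
            exact sq0 d (by linear_combination hA')
          refine ⟨a, haz, Or.inl ?_⟩
          refine veq _ ?_ ?_ ?_ ?_ <;> simp [hbz, hcz, hd0]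
        · exfalso
          have hC' := hC.resolve_left hcz
          have hdz : d ≠ 0 := by
            intro hd0
            rw [hbz, hd0] at hA'
            exact hcz (sq0 c (cancel _ _ h0 (by linear_combination -hA')))
          have hD' := hD.resolve_left hdz
          have key : (2:k) * (lam * ((lam - 1) * c ^ 2)) = 0 := by
            rw [hbz] at hA' hC' hD'
            linear_combination -(lam-1) * hA' + hC' + lam * hD'
          exact sq_ne c hcz (cancel _ _ h1' (cancel _ _ h0 (cancel _ _ h2 key)))
      · have hB' := hB.resolve_left hbz
        by_cases hcz : c = 0
        · exfalso
          have hdz : d ≠ 0 := by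
            intro hd0
            rw [hcz, hd0] at hA'
            exact hbz (sq0 b (cancel _ _ h1' (by linear_combination hA')))
          have hD' := hD.resolve_left hdz
          have key : (2:k) * (lam * ((lam - 1) * b ^ 2)) = 0 := by
            rw [hcz] at hA' hB' hD'
            linear_combination lam * hA' + hB' - (lam-1) * hD'
          exact sq_ne b hbz (cancel _ _ h1' (cancel _ _ h0 (cancel _ _ h2 key)))
        · have hC' := hC.resolve_left hcz
          by_cases hdz : d = 0
          · exfalso
            have key : (2:k) * (lam * ((lam - 1) * a ^ 2)) = 0 := by
              rw [hdz] at hA' hB' hC'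
              linear_combination hA' + lam * hB' - (lam-1) * hC'
            exact sq_ne a haz (cancel _ _ h1' (cancel _ _ h0 (cancel _ _ h2 key)))
          · have hD' := hD.resolve_left hdz
            have hqr : b ^ 2 = c ^ 2 := by
              have key : (2:k) * (lam * ((lam - 1) * (b ^ 2 - c ^ 2))) = 0 := by
                linear_combination lam * hA' + hB' - (lam - 1) * hD'
              have := cancel _ _ h1' (cancel _ _ h0 (cancel _ _ h2 key))
              linear_combination this
            have hpq : a ^ 2 = b ^ 2 := by linear_combination hD' + (lam - 1) * hqr
            have hsd : d ^ 2 = b ^ 2 := by linear_combination hA' - lam * hqr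
            refine ⟨a, haz, Or.inr (Or.inr (Or.inr (Or.inr
              ⟨b / a, c / a, d / a, ?_, ?_, ?_, ?_⟩)))⟩
            · have hfac : (b - a) * (b + a) = 0 := by linear_combination -hpq
              rcases mul_eq_zero.mp hfac with h | h
              · left; rw [sub_eq_zero.mp h, div_self haz]
              · right; rw [eq_neg_of_add_eq_zero_left h, neg_div, div_self haz]
            · have hfac : (c - a) * (c + a) = 0 := by linear_combination -hpq - hqr
              rcases mul_eq_zero.mp hfac with h | h
              · left; rw [sub_eq_zero.mp h, div_self haz]
              · right; rw [eq_neg_of_add_eq_zero_left h, neg_div, div_self haz]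
            · have hfac : (d - a) * (d + a) = 0 := by linear_combination hsd - hpq
              rcases mul_eq_zero.mp hfac with h | h
              · left; rw [sub_eq_zero.mp h, div_self haz]
              · right; rw [eq_neg_of_add_eq_zero_left h, neg_div, div_self haz]
            · refine veq _ ?_ ?_ ?_ ?_ <;> simp <;> field_simp
  · rintro ⟨t, ht, hcase⟩
    have comp : ∀ (x0 x1 x2 x3 : k), v = t • ![x0,x1,x2,x3] →
        a = t * x0 ∧ b = t * x1 ∧ c = t * x2 ∧ d = t * x3 := by
      intro x0 x1 x2 x3 hveq
      refine ⟨?_, ?_, ?_, ?_⟩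
      · rw [ha, hveq]; simp
      · rw [hb, hveq]; simp
      · rw [hc, hveq]; simp
      · rw [hd, hveq]; simp
    rcases hcase with hveq | hveq | hveq | hveq | ⟨e2, e3, e4, he2, he3, he4, hveq⟩
    · obtain ⟨e0, e1', e2', e3'⟩ := comp _ _ _ _ hveq
      refine ⟨?_, ?_⟩
      · rw [hFa, e0, e1', e2', e3']; ring
      · rw [pdall, hP0, hP1, hP2, hP3, e0, e1', e2', e3']
        refine ⟨by ring, by ring, by ring, by ring⟩
    · obtain ⟨e0, e1', e2', e3'⟩ := comp _ _ _ _ hveq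
      refine ⟨?_, ?_⟩
      · rw [hFa, e0, e1', e2', e3']; ring
      · rw [pdall, hP0, hP1, hP2, hP3, e0, e1', e2', e3']
        refine ⟨by ring, by ring, by ring, by ring⟩
    · obtain ⟨e0, e1', e2', e3'⟩ := comp _ _ _ _ hveq
      refine ⟨?_, ?_⟩
      · rw [hFa, e0, e1', e2', e3']; ring
      · rw [pdall, hP0, hP1, hP2, hP3, e0, e1', e2', e3']
        refine ⟨by ring, by ring, by ring, by ring⟩
    · obtain ⟨e0, e1', e2', e3'⟩ := comp _ _ _ _ hveq
      refine ⟨?_, ?_⟩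
      · rw [hFa, e0, e1', e2', e3']; ring
      · rw [pdall, hP0, hP1, hP2, hP3, e0, e1', e2', e3']
        refine ⟨by ring, by ring, by ring, by ring⟩
    · obtain ⟨e0, e1', e2', e3'⟩ := comp _ _ _ _ hveq
      have hs2 : e2 ^ 2 = 1 := by rcases he2 with h | h <;> rw [h] <;> ring
      have hs3 : e3 ^ 2 = 1 := by rcases he3 with h | h <;> rw [h] <;> ring
      have hs4 : e4 ^ 2 = 1 := by rcases he4 with h | h <;> rw [h] <;> ring
      refine ⟨?_, ?_⟩
      · rw [hFa, e0, e1', e2', e3']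
        linear_combination (t^4 * ((lam-1) + e3^2 - lam * e4^2)) * hs2
          + (t^4 * (1 - lam + (lam-1)*e4^2)) * hs3
      · rw [pdall, hP0, hP1, hP2, hP3, e0, e1', e2', e3']
        refine ⟨?_, ?_, ?_, ?_⟩
        · linear_combination (2*t^3*(lam-1)) * hs2 + (-2*t^3*lam) * hs3 + (2*t^3) * hs4
        · linear_combination (2*t^3*e2) * hs3 + (-2*t^3*lam*e2) * hs4
        · linear_combination (2*t^3*e3) * hs2 + (2*t^3*(lam-1)*e3) * hs4
        · linear_combination (-2*t^3*lam*e4) * hs2 + (2*t^3*(lam-1)*e4) * hs3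
end

section
/- Let k be a field of characteristic ≠ 2 and let λ ∈ k with λ ≠ 0 and λ ≠ 1. At each of the 12 points (1,0,0,0), (0,1,0,0), (0,0,1,0), (0,0,0,1), and (1, ε₂, ε₃, ε₄) with ε₂, ε₃, ε₄ ∈ {1, −1}, the 4×4 Hessian matrix of second partial derivatives of F has rank exactly 3; i.e., each of these singular points of the quartic K is an ordinary double point (an A₁ singularity). -/
open MvPolynomial
lemma det_fin_four' {R : Type*} [CommRing R] (A : Matrix (Fin 4) (Fin 4) R) :
    A.det =
      A 0 0*(A 1 1*(A 2 2*A 3 3 - A 2 3*A 3 2) - A 1 2*(A 2 1*A 3 3 - A 2 3*A 3 1) + A 1 3*(A 2 1*A 3 2 - A 2 2*A 3 1))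
    - A 0 1*(A 1 0*(A 2 2*A 3 3 - A 2 3*A 3 2) - A 1 2*(A 2 0*A 3 3 - A 2 3*A 3 0) + A 1 3*(A 2 0*A 3 2 - A 2 2*A 3 0))
    + A 0 2*(A 1 0*(A 2 1*A 3 3 - A 2 3*A 3 1) - A 1 1*(A 2 0*A 3 3 - A 2 3*A 3 0) + A 1 3*(A 2 0*A 3 1 - A 2 1*A 3 0))
    - A 0 3*(A 1 0*(A 2 1*A 3 2 - A 2 2*A 3 1) - A 1 1*(A 2 0*A 3 2 - A 2 2*A 3 0) + A 1 2*(A 2 0*A 3 1 - A 2 1*A 3 0)) := by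
  rw [Matrix.det_succ_row_zero]
  simp [Fin.sum_univ_succ, Matrix.det_fin_three, Fin.succAbove, show (Fin.succ 2 : Fin 4) = 3 from rfl, show (Fin.succ 1 : Fin 4) = 2 from rfl, show (Fin.succ 0 : Fin 4) = 1 from rfl, show ((2:Fin 3).castSucc : Fin 4) = 2 from rfl, show ((1:Fin 3).castSucc : Fin 4) = 1 from rfl, show ((0:Fin 3).castSucc : Fin 4) = 0 from rfl]
  ring


lemma pderiv_two' {k : Type*} [CommRing k] (i : Fin 4) :
    pderiv i (2 : MvPolynomial (Fin 4) k) = 0 := by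
  have h : (2 : MvPolynomial (Fin 4) k) = C 2 := by simp [map_ofNat]
  rw [h, pderiv_C]

lemma rank_le_three' {k : Type*} [Field k] (A : Matrix (Fin 4) (Fin 4) k) (h : A.det = 0) :
    A.rank ≤ 3 := by
  obtain ⟨w, hw0, hAw⟩ := Matrix.exists_mulVec_eq_zero_iff.2 h
  have hfr := LinearMap.finrank_range_add_finrank_ker A.mulVecLin
  have h4 : Module.finrank k (Fin 4 → k) = 4 := by simp
  have hker : 0 < Module.finrank k (LinearMap.ker A.mulVecLin) := by
    rw [Module.finrank_pos_iff]
    exact ⟨⟨⟨w, by simpa using hAw⟩, 0, by simpa [Subtype.ext_iff] using hw0⟩⟩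
  rw [Matrix.rank]
  omega

lemma three_le_rank' {k : Type*} [Field k] (A : Matrix (Fin 4) (Fin 4) k)
    (f g : Fin 3 → Fin 4) (h : (A.submatrix f g).det ≠ 0) : 3 ≤ A.rank := by
  have hr : (A.submatrix f g).rank = 3 := by
    rw [Matrix.rank_of_isUnit _ ((Matrix.isUnit_iff_isUnit_det _).2 (isUnit_iff_ne_zero.2 h))]
    simp
  have key : A.submatrix f g
      = (1 : Matrix (Fin 4) (Fin 4) k).submatrix f (Equiv.refl (Fin 4)) * A
        * (1 : Matrix (Fin 4) (Fin 4) k).submatrix (Equiv.refl (Fin 4)) g := by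
    rw [Matrix.one_submatrix_mul, Matrix.mul_submatrix_one]
    simp
  calc (3 : ℕ) = (A.submatrix f g).rank := hr.symm
    _ ≤ ((1 : Matrix (Fin 4) (Fin 4) k).submatrix f (Equiv.refl (Fin 4)) * A).rank := by
        rw [key]; exact Matrix.rank_mul_le_left _ _
    _ ≤ A.rank := Matrix.rank_mul_le_right _ _

set_option maxHeartbeats 2000000 in
lemma hess' {k : Type*} [Field k] (lam : k) (v : Fin 4 → k) :
    (Matrix.of fun i j : Fin 4 => eval v (pderiv i (pderiv j
      (C (lam - 1) * X 0 ^ 2 * X 1 ^ 2 - C lam * X 0 ^ 2 * X 2 ^ 2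
        + X 1 ^ 2 * X 2 ^ 2 + X 0 ^ 2 * X 3 ^ 2 - C lam * X 1 ^ 2 * X 3 ^ 2
        + C (lam - 1) * X 2 ^ 2 * X 3 ^ 2))))
    = !![2*((lam-1)*v 1^2 - lam*v 2^2 + v 3^2), 4*(lam-1)*v 0*v 1, -4*lam*v 0*v 2, 4*v 0*v 3;
         4*(lam-1)*v 0*v 1, 2*((lam-1)*v 0^2 + v 2^2 - lam*v 3^2), 4*v 1*v 2, -4*lam*v 1*v 3;
         -4*lam*v 0*v 2, 4*v 1*v 2, 2*(-lam*v 0^2 + v 1^2 + (lam-1)*v 3^2), 4*(lam-1)*v 2*v 3;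
         4*v 0*v 3, -4*lam*v 1*v 3, 4*(lam-1)*v 2*v 3, 2*(v 0^2 - lam*v 1^2 + (lam-1)*v 2^2)] := by
  have e00 : eval v (pderiv (0:Fin 4) (pderiv (0:Fin 4)
      (C (lam - 1) * X 0 ^ 2 * X 1 ^ 2 - C lam * X 0 ^ 2 * X 2 ^ 2
        + X 1 ^ 2 * X 2 ^ 2 + X 0 ^ 2 * X 3 ^ 2 - C lam * X 1 ^ 2 * X 3 ^ 2
        + C (lam - 1) * X 2 ^ 2 * X 3 ^ 2))) = 2*((lam-1)*v 1^2 - lam*v 2^2 + v 3^2) := by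
    simp [pderiv_mul, pderiv_pow, pderiv_X, pderiv_C, pderiv_two']
    try ring
  have e01 : eval v (pderiv (0:Fin 4) (pderiv (1:Fin 4)
      (C (lam - 1) * X 0 ^ 2 * X 1 ^ 2 - C lam * X 0 ^ 2 * X 2 ^ 2
        + X 1 ^ 2 * X 2 ^ 2 + X 0 ^ 2 * X 3 ^ 2 - C lam * X 1 ^ 2 * X 3 ^ 2
        + C (lam - 1) * X 2 ^ 2 * X 3 ^ 2))) = 4*(lam-1)*v 0*v 1 := by
    simp [pderiv_mul, pderiv_pow, pderiv_X, pderiv_C, pderiv_two']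
    try ring
  have e02 : eval v (pderiv (0:Fin 4) (pderiv (2:Fin 4)
      (C (lam - 1) * X 0 ^ 2 * X 1 ^ 2 - C lam * X 0 ^ 2 * X 2 ^ 2
        + X 1 ^ 2 * X 2 ^ 2 + X 0 ^ 2 * X 3 ^ 2 - C lam * X 1 ^ 2 * X 3 ^ 2
        + C (lam - 1) * X 2 ^ 2 * X 3 ^ 2))) = -4*lam*v 0*v 2 := by
    simp [pderiv_mul, pderiv_pow, pderiv_X, pderiv_C, pderiv_two']
    try ring
  have e03 : eval v (pderiv (0:Fin 4) (pderiv (3:Fin 4)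
      (C (lam - 1) * X 0 ^ 2 * X 1 ^ 2 - C lam * X 0 ^ 2 * X 2 ^ 2
        + X 1 ^ 2 * X 2 ^ 2 + X 0 ^ 2 * X 3 ^ 2 - C lam * X 1 ^ 2 * X 3 ^ 2
        + C (lam - 1) * X 2 ^ 2 * X 3 ^ 2))) = 4*v 0*v 3 := by
    simp [pderiv_mul, pderiv_pow, pderiv_X, pderiv_C, pderiv_two']
    try ring
  have e10 : eval v (pderiv (1:Fin 4) (pderiv (0:Fin 4)
      (C (lam - 1) * X 0 ^ 2 * X 1 ^ 2 - C lam * X 0 ^ 2 * X 2 ^ 2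
        + X 1 ^ 2 * X 2 ^ 2 + X 0 ^ 2 * X 3 ^ 2 - C lam * X 1 ^ 2 * X 3 ^ 2
        + C (lam - 1) * X 2 ^ 2 * X 3 ^ 2))) = 4*(lam-1)*v 0*v 1 := by
    simp [pderiv_mul, pderiv_pow, pderiv_X, pderiv_C, pderiv_two']
    try ring
  have e11 : eval v (pderiv (1:Fin 4) (pderiv (1:Fin 4)
      (C (lam - 1) * X 0 ^ 2 * X 1 ^ 2 - C lam * X 0 ^ 2 * X 2 ^ 2
        + X 1 ^ 2 * X 2 ^ 2 + X 0 ^ 2 * X 3 ^ 2 - C lam * X 1 ^ 2 * X 3 ^ 2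
        + C (lam - 1) * X 2 ^ 2 * X 3 ^ 2))) = 2*((lam-1)*v 0^2 + v 2^2 - lam*v 3^2) := by
    simp [pderiv_mul, pderiv_pow, pderiv_X, pderiv_C, pderiv_two']
    try ring
  have e12 : eval v (pderiv (1:Fin 4) (pderiv (2:Fin 4)
      (C (lam - 1) * X 0 ^ 2 * X 1 ^ 2 - C lam * X 0 ^ 2 * X 2 ^ 2
        + X 1 ^ 2 * X 2 ^ 2 + X 0 ^ 2 * X 3 ^ 2 - C lam * X 1 ^ 2 * X 3 ^ 2
        + C (lam - 1) * X 2 ^ 2 * X 3 ^ 2))) = 4*v 1*v 2 := by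
    simp [pderiv_mul, pderiv_pow, pderiv_X, pderiv_C, pderiv_two']
    try ring
  have e13 : eval v (pderiv (1:Fin 4) (pderiv (3:Fin 4)
      (C (lam - 1) * X 0 ^ 2 * X 1 ^ 2 - C lam * X 0 ^ 2 * X 2 ^ 2
        + X 1 ^ 2 * X 2 ^ 2 + X 0 ^ 2 * X 3 ^ 2 - C lam * X 1 ^ 2 * X 3 ^ 2
        + C (lam - 1) * X 2 ^ 2 * X 3 ^ 2))) = -4*lam*v 1*v 3 := by
    simp [pderiv_mul, pderiv_pow, pderiv_X, pderiv_C, pderiv_two']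
    try ring
  have e20 : eval v (pderiv (2:Fin 4) (pderiv (0:Fin 4)
      (C (lam - 1) * X 0 ^ 2 * X 1 ^ 2 - C lam * X 0 ^ 2 * X 2 ^ 2
        + X 1 ^ 2 * X 2 ^ 2 + X 0 ^ 2 * X 3 ^ 2 - C lam * X 1 ^ 2 * X 3 ^ 2
        + C (lam - 1) * X 2 ^ 2 * X 3 ^ 2))) = -4*lam*v 0*v 2 := by
    simp [pderiv_mul, pderiv_pow, pderiv_X, pderiv_C, pderiv_two']
    try ring
  have e21 : eval v (pderiv (2:Fin 4) (pderiv (1:Fin 4)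
      (C (lam - 1) * X 0 ^ 2 * X 1 ^ 2 - C lam * X 0 ^ 2 * X 2 ^ 2
        + X 1 ^ 2 * X 2 ^ 2 + X 0 ^ 2 * X 3 ^ 2 - C lam * X 1 ^ 2 * X 3 ^ 2
        + C (lam - 1) * X 2 ^ 2 * X 3 ^ 2))) = 4*v 1*v 2 := by
    simp [pderiv_mul, pderiv_pow, pderiv_X, pderiv_C, pderiv_two']
    try ring
  have e22 : eval v (pderiv (2:Fin 4) (pderiv (2:Fin 4)
      (C (lam - 1) * X 0 ^ 2 * X 1 ^ 2 - C lam * X 0 ^ 2 * X 2 ^ 2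
        + X 1 ^ 2 * X 2 ^ 2 + X 0 ^ 2 * X 3 ^ 2 - C lam * X 1 ^ 2 * X 3 ^ 2
        + C (lam - 1) * X 2 ^ 2 * X 3 ^ 2))) = 2*(-lam*v 0^2 + v 1^2 + (lam-1)*v 3^2) := by
    simp [pderiv_mul, pderiv_pow, pderiv_X, pderiv_C, pderiv_two']
    try ring
  have e23 : eval v (pderiv (2:Fin 4) (pderiv (3:Fin 4)
      (C (lam - 1) * X 0 ^ 2 * X 1 ^ 2 - C lam * X 0 ^ 2 * X 2 ^ 2
        + X 1 ^ 2 * X 2 ^ 2 + X 0 ^ 2 * X 3 ^ 2 - C lam * X 1 ^ 2 * X 3 ^ 2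
        + C (lam - 1) * X 2 ^ 2 * X 3 ^ 2))) = 4*(lam-1)*v 2*v 3 := by
    simp [pderiv_mul, pderiv_pow, pderiv_X, pderiv_C, pderiv_two']
    try ring
  have e30 : eval v (pderiv (3:Fin 4) (pderiv (0:Fin 4)
      (C (lam - 1) * X 0 ^ 2 * X 1 ^ 2 - C lam * X 0 ^ 2 * X 2 ^ 2
        + X 1 ^ 2 * X 2 ^ 2 + X 0 ^ 2 * X 3 ^ 2 - C lam * X 1 ^ 2 * X 3 ^ 2
        + C (lam - 1) * X 2 ^ 2 * X 3 ^ 2))) = 4*v 0*v 3 := by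
    simp [pderiv_mul, pderiv_pow, pderiv_X, pderiv_C, pderiv_two']
    try ring
  have e31 : eval v (pderiv (3:Fin 4) (pderiv (1:Fin 4)
      (C (lam - 1) * X 0 ^ 2 * X 1 ^ 2 - C lam * X 0 ^ 2 * X 2 ^ 2
        + X 1 ^ 2 * X 2 ^ 2 + X 0 ^ 2 * X 3 ^ 2 - C lam * X 1 ^ 2 * X 3 ^ 2
        + C (lam - 1) * X 2 ^ 2 * X 3 ^ 2))) = -4*lam*v 1*v 3 := by
    simp [pderiv_mul, pderiv_pow, pderiv_X, pderiv_C, pderiv_two']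
    try ring
  have e32 : eval v (pderiv (3:Fin 4) (pderiv (2:Fin 4)
      (C (lam - 1) * X 0 ^ 2 * X 1 ^ 2 - C lam * X 0 ^ 2 * X 2 ^ 2
        + X 1 ^ 2 * X 2 ^ 2 + X 0 ^ 2 * X 3 ^ 2 - C lam * X 1 ^ 2 * X 3 ^ 2
        + C (lam - 1) * X 2 ^ 2 * X 3 ^ 2))) = 4*(lam-1)*v 2*v 3 := by
    simp [pderiv_mul, pderiv_pow, pderiv_X, pderiv_C, pderiv_two']
    try ring
  have e33 : eval v (pderiv (3:Fin 4) (pderiv (3:Fin 4)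
      (C (lam - 1) * X 0 ^ 2 * X 1 ^ 2 - C lam * X 0 ^ 2 * X 2 ^ 2
        + X 1 ^ 2 * X 2 ^ 2 + X 0 ^ 2 * X 3 ^ 2 - C lam * X 1 ^ 2 * X 3 ^ 2
        + C (lam - 1) * X 2 ^ 2 * X 3 ^ 2))) = 2*(v 0^2 - lam*v 1^2 + (lam-1)*v 2^2) := by
    simp [pderiv_mul, pderiv_pow, pderiv_X, pderiv_C, pderiv_two']
    try ring
  ext i j
  fin_cases i <;> fin_cases j
  · exact e00
  · exact e01
  · exact e02
  · exact e03
  · exact e10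
  · exact e11
  · exact e12
  · exact e13
  · exact e20
  · exact e21
  · exact e22
  · exact e23
  · exact e30
  · exact e31
  · exact e32
  · exact e33


set_option maxHeartbeats 2000000 in
/-- At each of the `12` singular points of the quartic Kummer model
`F = (λ−1)x²y² − λx²z² + y²z² + x²w² − λy²w² + (λ−1)z²w²` (char `k ≠ 2`, `λ ≠ 0, 1`),
the `4×4` Hessian matrix of second partial derivatives of `F` has rank exactly `3`;
i.e. each singular point is an ordinary double point (`A₁` singularity). -/
theorem stmt_5 {k : Type*} [Field k] (h2 : (2 : k) ≠ 0)
    (lam : k) (h0 : lam ≠ 0) (h1 : lam ≠ 1)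
    (F : MvPolynomial (Fin 4) k)
    (hF : F = C (lam - 1) * X 0 ^ 2 * X 1 ^ 2 - C lam * X 0 ^ 2 * X 2 ^ 2
        + X 1 ^ 2 * X 2 ^ 2 + X 0 ^ 2 * X 3 ^ 2 - C lam * X 1 ^ 2 * X 3 ^ 2
        + C (lam - 1) * X 2 ^ 2 * X 3 ^ 2)
    (v : Fin 4 → k)
    (hv : v = ![1, 0, 0, 0] ∨ v = ![0, 1, 0, 0] ∨ v = ![0, 0, 1, 0] ∨ v = ![0, 0, 0, 1] ∨
      ∃ e2 e3 e4 : k, (e2 = 1 ∨ e2 = -1) ∧ (e3 = 1 ∨ e3 = -1) ∧ (e4 = 1 ∨ e4 = -1) ∧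
        v = ![1, e2, e3, e4]) :
    (Matrix.of fun i j : Fin 4 => eval v (pderiv i (pderiv j F))).rank = 3 := by
  have hlam : lam - 1 ≠ 0 := sub_ne_zero.2 h1
  have h4 : (4 : k) ≠ 0 := by
    have := mul_ne_zero h2 h2
    norm_num at this ⊢
    exact this
  have h8 : (8 : k) ≠ 0 := by
    have := mul_ne_zero h2 (mul_ne_zero h2 h2)
    norm_num at this ⊢
    exact this
  have h128' : (128 : k) ≠ 0 := by
    have := mul_ne_zero (mul_ne_zero h8 h8) h2
    norm_num at this ⊢
    exact this
  have hm8 : (-8 : k) * (lam * (lam - 1)) ≠ 0 :=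
    mul_ne_zero (neg_ne_zero.2 h8) (mul_ne_zero h0 hlam)
  have h128 : (128 : k) * (lam * (lam - 1)) ≠ 0 :=
    mul_ne_zero h128' (mul_ne_zero h0 hlam)
  subst hF
  rcases hv with hv | hv | hv | hv | ⟨e2, e3, e4, he2, he3, he4, hv⟩
  · subst hv
    rw [hess']
    refine le_antisymm (rank_le_three' _ ?_) (three_le_rank' _ ![1,2,3] ![1,2,3] ?_)
    · simp [Matrix.det_succ_row_zero, Fin.sum_univ_succ]
      try ring
    · intro hd
      apply hm8
      rw [← hd, Matrix.det_fin_three]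
      simp
      try ring
  · subst hv
    rw [hess']
    refine le_antisymm (rank_le_three' _ ?_) (three_le_rank' _ ![0,2,3] ![0,2,3] ?_)
    · simp [Matrix.det_succ_row_zero, Fin.sum_univ_succ]
      try ring
    · intro hd
      apply hm8
      rw [← hd, Matrix.det_fin_three]
      simp
      try ring
  · subst hv
    rw [hess']
    refine le_antisymm (rank_le_three' _ ?_) (three_le_rank' _ ![0,1,3] ![0,1,3] ?_)
    · simp [Matrix.det_succ_row_zero, Fin.sum_univ_succ]
      try ring
    · intro hd
      apply hm8
      rw [← hd, Matrix.det_fin_three]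
      simp
      try ring
  · subst hv
    rw [hess']
    refine le_antisymm (rank_le_three' _ ?_) (three_le_rank' _ ![0,1,2] ![0,1,2] ?_)
    · simp [Matrix.det_succ_row_zero, Fin.sum_univ_succ]
      try ring
    · intro hd
      apply hm8
      rw [← hd, Matrix.det_fin_three]
      simp
      try ring
  · subst hv
    rcases he4 with rfl | rfl
    · rcases he2 with rfl | rfl <;> rcases he3 with rfl | rfl <;>
        rw [hess'] <;>
        refine le_antisymm (rank_le_three' _ ?_) (three_le_rank' _ ![0,1,2] ![1,2,3] ?_)
      all_goals first
        | (rw [det_fin_four']; simp; try ring)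
        | (intro hd
           apply h128
           rw [← hd, Matrix.det_fin_three]
           simp
           try ring)
    · rcases he2 with rfl | rfl <;> rcases he3 with rfl | rfl <;>
        rw [hess'] <;>
        refine le_antisymm (rank_le_three' _ ?_) (three_le_rank' _ ![0,1,2] ![1,2,3] ?_)
      all_goals first
        | (rw [det_fin_four']; simp; try ring)
        | (intro hd
           apply (neg_ne_zero.2 h128)
           rw [← hd, Matrix.det_fin_three]
           simp
           try ring)
end

section
/- The subgroup of SL₂(ℤ) generated by the two matrices [[1,0],[−1,1]] and [[2,3],[−1,−1]] is equal to Γ⁰(3) = { M ∈ SL₂(ℤ) : 3 divides the upper-right entry M₀₁ of M }. -/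
open Matrix

abbrev SL2 := Matrix.SpecialLinearGroup (Fin 2) ℤ

def T3k (k : ℤ) : SL2 := ⟨!![1, 3*k; 0, 1], by simp [Matrix.det_fin_two_of]⟩
def Lk (k : ℤ) : SL2 := ⟨!![1, 0; k, 1], by simp [Matrix.det_fin_two_of]⟩
def negI : SL2 := ⟨!![-1, 0; 0, -1], by simp [Matrix.det_fin_two_of]⟩

lemma coe_T3k (k : ℤ) : (T3k k : Matrix (Fin 2) (Fin 2) ℤ) = !![1, 3*k; 0, 1] := rfl
lemma coe_Lk (k : ℤ) : (Lk k : Matrix (Fin 2) (Fin 2) ℤ) = !![1, 0; k, 1] := rfl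
lemma coe_negI : (negI : Matrix (Fin 2) (Fin 2) ℤ) = !![-1, 0; 0, -1] := rfl

lemma exists_reduce' (m c : ℤ) (hm : 0 < m) :
    ∃ k : ℤ, 2 * (c + k * m).natAbs ≤ m.natAbs := by
  have h := Int.emod_add_mul_ediv c m
  have hr0 : 0 ≤ c % m := Int.emod_nonneg c hm.ne'
  have hr1 : c % m < m := Int.emod_lt_of_pos c hm
  by_cases hcm : 2 * (c % m) ≤ m
  · refine ⟨-(c / m), ?_⟩
    have e1 : c + -(c / m) * m = c % m := by linear_combination -h
    rw [e1]; omega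
  · refine ⟨-(c / m) - 1, ?_⟩
    have e1 : c + (-(c / m) - 1) * m = c % m - m := by linear_combination -h
    rw [e1]; omega

lemma exists_reduce (a c : ℤ) (ha : a ≠ 0) :
    ∃ k : ℤ, 2 * (c + k * a).natAbs ≤ a.natAbs := by
  rcases lt_or_gt_of_ne ha with h | h
  · obtain ⟨k, hk⟩ := exists_reduce' (-a) c (by omega)
    refine ⟨-k, ?_⟩
    have e : c + -k * a = c + k * -a := by ring
    rw [e]
    simpa using hk
  · exact exists_reduce' a c h

lemma descent (H : Subgroup SL2) (hT : ∀ k, T3k k ∈ H) (hL : ∀ k, Lk k ∈ H)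
    (hN : negI ∈ H) :
    ∀ n : ℕ, ∀ M : SL2, 3 ∣ (M : Matrix (Fin 2) (Fin 2) ℤ) 0 1 →
      ((M : Matrix (Fin 2) (Fin 2) ℤ) 0 0).natAbs
        + ((M : Matrix (Fin 2) (Fin 2) ℤ) 1 0).natAbs = n → M ∈ H := by
  intro n
  induction n using Nat.strong_induction_on with
  | _ n ih =>
  intro M hb hn
  obtain ⟨t, ht⟩ := hb
  set a : ℤ := (M : Matrix (Fin 2) (Fin 2) ℤ) 0 0 with ha
  set b : ℤ := (M : Matrix (Fin 2) (Fin 2) ℤ) 0 1 with hbdef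
  set c : ℤ := (M : Matrix (Fin 2) (Fin 2) ℤ) 1 0 with hc
  set d : ℤ := (M : Matrix (Fin 2) (Fin 2) ℤ) 1 1 with hd
  have hdet : a * d - b * c = 1 := by
    have hp := M.prop
    rw [Matrix.det_fin_two] at hp
    exact hp
  have hMcoe : (M : Matrix (Fin 2) (Fin 2) ℤ) = !![a, b; c, d] :=
    Matrix.eta_fin_two _
  have h3a : ¬ (3 ∣ a) := by
    rintro ⟨s, hs⟩
    have h31 : (3:ℤ) ∣ 1 := by
      rw [← hdet, hs, ht]; exact ⟨s * d - t * c, by ring⟩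
    omega
  have ha0 : a ≠ 0 := fun h => h3a (h ▸ dvd_zero 3)
  have hane : a.natAbs ≠ 0 := by simpa using ha0
  by_cases hc0 : c = 0
  · -- base case: M is ± upper triangular unipotent
    have had : a * d = 1 := by rw [← hdet, hc0]; ring
    rcases Int.mul_eq_one_iff_eq_one_or_neg_one.mp had with ⟨h1, h2⟩ | ⟨h1, h2⟩
    · have hMT : M = T3k t := Subtype.ext (by rw [hMcoe, coe_T3k, h1, h2, hc0, ht])
      rw [hMT]; exact hT t
    · have hMT : M = negI * T3k (-t) := by
        apply Subtype.ext
        rw [hMcoe, Matrix.SpecialLinearGroup.coe_mul, coe_negI, coe_T3k,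
          Matrix.mul_fin_two, h1, h2, hc0, ht]
        norm_num
      rw [hMT]; exact H.mul_mem hN (hT _)
  · by_cases hsize : 2 * c.natAbs ≤ a.natAbs
    · -- reduce a using T3k
      have h3c : (3:ℤ) * c ≠ 0 := by
        intro h; exact hc0 (by omega)
      obtain ⟨k, hk⟩ := exists_reduce (3 * c) a h3c
      have hM' : ((T3k k * M : SL2) : Matrix (Fin 2) (Fin 2) ℤ)
          = !![a + 3 * k * c, b + 3 * k * d; c, d] := by
        rw [Matrix.SpecialLinearGroup.coe_mul, coe_T3k, hMcoe, Matrix.mul_fin_two]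
        congr 1 <;> ring_nf
      have hknat : (3 * c).natAbs = 3 * c.natAbs := by
        rw [Int.natAbs_mul]; rfl
      have hka : a + k * (3 * c) = a + 3 * k * c := by ring
      rw [hka] at hk
      have hmem : T3k k * M ∈ H := by
        apply ih ((a + 3 * k * c).natAbs + c.natAbs) (by omega)
        · rw [hM']
          exact ⟨t + k * d, by simp; rw [ht]; ring⟩
        · rw [hM']; simp
      have := H.mul_mem (H.inv_mem (hT k)) hmem
      simpa [← mul_assoc] using this
    · -- reduce c using Lk
      obtain ⟨k, hk⟩ := exists_reduce a c ha0
      have hM' : ((Lk k * M : SL2) : Matrix (Fin 2) (Fin 2) ℤ)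
          = !![a, b; c + k * a, d + k * b] := by
        rw [Matrix.SpecialLinearGroup.coe_mul, coe_Lk, hMcoe, Matrix.mul_fin_two]
        congr 1 <;> ring_nf
      have hmem : Lk k * M ∈ H := by
        apply ih (a.natAbs + (c + k * a).natAbs) ?_
        · rw [hM']
          exact ⟨t, by simp [ht]⟩
        · rw [hM']; simp
        · have hcne : c.natAbs ≠ 0 := by
            simpa using hc0
          omega
      have := H.mul_mem (H.inv_mem (hL k)) hmem
      simpa [← mul_assoc] using this

def Gamma3 : Subgroup SL2 where
  carrier := {M | 3 ∣ (M : Matrix (Fin 2) (Fin 2) ℤ) 0 1}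
  one_mem' := by
    simp [Matrix.one_apply]
  mul_mem' := by
    intro M N hM hN
    simp only [Set.mem_setOf_eq] at *
    rw [Matrix.SpecialLinearGroup.coe_mul, Matrix.mul_apply, Fin.sum_univ_two]
    exact dvd_add (Dvd.dvd.mul_left hN _) (hM.mul_right _)
  inv_mem' := by
    intro M hM
    simp only [Set.mem_setOf_eq] at *
    rw [Matrix.SpecialLinearGroup.SL2_inv_expl]
    simpa using hM.neg_right

/-- The subgroup of `SL₂(ℤ)` generated by `[[1,0],[−1,1]]` and `[[2,3],[−1,−1]]` is the
congruence subgroup `Γ⁰(3)` of matrices whose upper-right entry is divisible by `3`. -/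
theorem stmt_11 (A B : Matrix.SpecialLinearGroup (Fin 2) ℤ)
    (hA : (A : Matrix (Fin 2) (Fin 2) ℤ) = !![1, 0; -1, 1])
    (hB : (B : Matrix (Fin 2) (Fin 2) ℤ) = !![2, 3; -1, -1]) :
    ∀ M : Matrix.SpecialLinearGroup (Fin 2) ℤ,
      M ∈ Subgroup.closure ({A, B} : Set (Matrix.SpecialLinearGroup (Fin 2) ℤ)) ↔
        3 ∣ (M : Matrix (Fin 2) (Fin 2) ℤ) 0 1 := by
  set H := Subgroup.closure ({A, B} : Set SL2) with hH
  have hAH : A ∈ H := Subgroup.subset_closure (Set.mem_insert _ _)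
  have hBH : B ∈ H := Subgroup.subset_closure (Set.mem_insert_of_mem _ rfl)
  -- L = A⁻¹
  have hAinv : A⁻¹ = Lk 1 := by
    rw [Matrix.SpecialLinearGroup.SL2_inv_expl]
    apply Subtype.ext
    simp [hA, Lk]
    rfl
  have hL1 : Lk 1 ∈ H := hAinv ▸ H.inv_mem hAH
  -- T3 = A⁻¹ * B * B
  have hT31 : T3k 1 = Lk 1 * B * B := by
    apply Subtype.ext
    rw [Matrix.SpecialLinearGroup.coe_mul, Matrix.SpecialLinearGroup.coe_mul,
      coe_T3k, coe_Lk, hB, Matrix.mul_fin_two, Matrix.mul_fin_two]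
    norm_num
  have hT1 : T3k 1 ∈ H := hT31 ▸ H.mul_mem (H.mul_mem hL1 hBH) hBH
  -- -I = B^3
  have hNI : negI = B * B * B := by
    apply Subtype.ext
    rw [Matrix.SpecialLinearGroup.coe_mul, Matrix.SpecialLinearGroup.coe_mul,
      coe_negI, hB, Matrix.mul_fin_two, Matrix.mul_fin_two]
    norm_num
  have hN : negI ∈ H := hNI ▸ H.mul_mem (H.mul_mem hBH hBH) hBH
  -- powers
  have hLadd : ∀ j : ℤ, Lk j * Lk 1 = Lk (j + 1) := by
    intro j
    apply Subtype.ext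
    rw [Matrix.SpecialLinearGroup.coe_mul, coe_Lk, coe_Lk, coe_Lk, Matrix.mul_fin_two]
    norm_num
  have hLnat : ∀ n : ℕ, Lk n ∈ H := by
    intro n
    induction n with
    | zero =>
      have h0 : Lk 0 = 1 := Subtype.ext (by rw [coe_Lk]; ext i j; fin_cases i <;> fin_cases j <;> simp)
      rw [Nat.cast_zero, h0]; exact H.one_mem
    | succ n ihn =>
      have := H.mul_mem ihn hL1
      rw [hLadd] at this
      simpa using this
  have hLinv : ∀ n : ℕ, Lk (-(n : ℤ)) = (Lk n)⁻¹ := by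
    intro n
    rw [Matrix.SpecialLinearGroup.SL2_inv_expl]
    apply Subtype.ext
    rw [coe_Lk]
    simp [coe_Lk]
    rfl
  have hL : ∀ k : ℤ, Lk k ∈ H := by
    intro k
    obtain ⟨n, rfl | rfl⟩ := Int.eq_nat_or_neg k
    · exact hLnat n
    · rw [hLinv]; exact H.inv_mem (hLnat n)
  have hTadd : ∀ j : ℤ, T3k j * T3k 1 = T3k (j + 1) := by
    intro j
    apply Subtype.ext
    rw [Matrix.SpecialLinearGroup.coe_mul, coe_T3k, coe_T3k, coe_T3k, Matrix.mul_fin_two]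
    norm_num
    ring
  have hTnat : ∀ n : ℕ, T3k n ∈ H := by
    intro n
    induction n with
    | zero =>
      have h0 : T3k 0 = 1 := Subtype.ext (by rw [coe_T3k]; ext i j; fin_cases i <;> fin_cases j <;> simp)
      rw [Nat.cast_zero, h0]; exact H.one_mem
    | succ n ihn =>
      have := H.mul_mem ihn hT1
      rw [hTadd] at this
      simpa using this
  have hTinv : ∀ n : ℕ, T3k (-(n : ℤ)) = (T3k n)⁻¹ := by
    intro n
    rw [Matrix.SpecialLinearGroup.SL2_inv_expl]
    apply Subtype.ext
    rw [coe_T3k]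
    simp [coe_T3k]
    ring_nf
    rfl
  have hT : ∀ k : ℤ, T3k k ∈ H := by
    intro k
    obtain ⟨n, rfl | rfl⟩ := Int.eq_nat_or_neg k
    · exact hTnat n
    · rw [hTinv]; exact H.inv_mem (hTnat n)
  intro M
  constructor
  · intro hM
    have hsub : ({A, B} : Set SL2) ⊆ Gamma3 := by
      rintro x hx
      simp only [Set.mem_insert_iff, Set.mem_singleton_iff] at hx
      rcases hx with rfl | rfl
      · show (3:ℤ) ∣ _
        rw [hA]; simp
      · show (3:ℤ) ∣ _
        rw [hB]; norm_num
    exact (Subgroup.closure_le Gamma3).mpr hsub hM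
  · intro hM
    exact descent H hT hL hN _ M hM rfl
end
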